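/- Population is preserved by Γ: if the coefficients π^{(n)} satisfy π^{(n)}_{β'} = 0 for all non-populated β', and additionally π^{(n)}_β ≠ 0 implies [β] ≥ 0 or β = δ_n, then the induced endomorphism Γ maps the populated sector T into itself, and maps the sector T̃ := {π : π_β ≠ 0 ⟹ [β] ≥ 0} into itself; moreover for any n, D^n T ⊆ T̃. -/

import Mathlib

/-- Polynomial multiindices `n ∈ ℕ^{1+d}`. -/
abbrev PIdx (d : ℕ) := Fin (d + 1) →₀ ℕ

/-- Multiindices `β` over the variables `z_k` (`k : ℕ`, left summand) and `z_n`
(`n ∈ ℕ^{1+d}`, right summand), indexing the monomials `z^β` of `ℝ[[z_k, z_n]]`. -/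
abbrev MIdx (d : ℕ) := (ℕ ⊕ PIdx d) →₀ ℕ

/-- Parabolic degree `|n| = 2 n₀ + n₁ + ⋯ + n_d`. -/
def pDeg {d : ℕ} (n : PIdx d) : ℕ := n 0 + n.sum fun _ v => v

/-- `Σ_k β(k)`. -/
def kSum {d : ℕ} (β : MIdx d) : ℕ :=
  β.sum fun j m => match j with
    | Sum.inl _ => m
    | Sum.inr _ => 0

/-- `Σ_n β(n)`. -/
def nSum {d : ℕ} (β : MIdx d) : ℕ :=
  β.sum fun j m => match j with
    | Sum.inl _ => 0
    | Sum.inr _ => m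

/-- `Σ_n |n| β(n)`. -/
def npSum {d : ℕ} (β : MIdx d) : ℕ :=
  β.sum fun j m => match j with
    | Sum.inl _ => 0
    | Sum.inr n => pDeg n * m

/-- The bracket `[β] = Σ_k (k−1) β(k) − Σ_n β(n)`. -/
def brk {d : ℕ} (β : MIdx d) : ℤ :=
  β.sum fun j m => match j with
    | Sum.inl k => ((k : ℤ) - 1) * (m : ℤ)
    | Sum.inr _ => -(m : ℤ)

/-- Homogeneity `|β| = α(1 + (k̲−1) Σ_k β(k) − Σ_n β(n)) + 2 Σ_k β(k) + Σ_n |n| β(n)`. -/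
noncomputable def homog {d : ℕ} (α : ℝ) (kb : ℕ) (β : MIdx d) : ℝ :=
  α * (1 + ((kb : ℝ) - 1) * (kSum β : ℝ) - (nSum β : ℝ))
    + 2 * (kSum β : ℝ) + (npSum β : ℝ)

/-- `β` is purely polynomial: `β = δ_n` for some `n ∈ ℕ^{1+d}`. -/
def PurelyPoly {d : ℕ} (β : MIdx d) : Prop :=
  ∃ n : PIdx d, β = Finsupp.single (Sum.inr n) 1

/-- `β` is populated: `β = δ_n`, or `β = δ_{k̲} + δ_{n₁} + ⋯ + δ_{n_{k̲}}`,
or `[β] ≥ 0`. -/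
def Populated {d : ℕ} (kb : ℕ) (β : MIdx d) : Prop :=
  PurelyPoly β ∨ (β (Sum.inl kb) = 1 ∧ kSum β = 1 ∧ nSum β = kb) ∨ 0 ≤ brk β


/-! Since `[·]` is additive and `Γ` is multiplicative, it suffices to look at the generators:
`Γ` fixes `z_k`, and sends `z_n` to `z_n + π^{(n)}`, where `π^{(n)}` lives on `[β] ≥ 0 > -1 = [δ_n]`.
Hence `Γ` is unitriangular for the bracket: `(Γ z^γ)_β ≠ 0` forces `β = γ` or `[β] > [γ]`.
Populated multiindices have `[β] ≥ -1`, so a strict increase lands in `[β] ≥ 0`, and removing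
one `z_n` raises the bracket by one. -/

theorem Finsupp.induction_single_one {ι : Type*} {motive : (ι →₀ ℕ) → Prop} (f : ι →₀ ℕ)
    (zero : motive 0) (single_one_add : ∀ a f, motive f → motive (Finsupp.single a 1 + f)) :
    motive f := by
  induction f using Finsupp.induction with
  | zero => exact zero
  | single_add a b f _ hb hf =>
    clear hb
    induction b with
    | zero => simpa using hf
    | succ b ih =>
      rw [add_comm b 1, Finsupp.single_add, add_assoc]
      exact single_one_add _ _ ih

theorem eq_or_weight_lt_of_apply_ne_zero {ι R M : Type*} [DecidableEq ι]
    [NonUnitalNonAssocSemiring R] [AddCommMonoid M] [PartialOrder M] [IsOrderedCancelAddMonoid M]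
    (w : (ι →₀ ℕ) →+ M) (Γ : (ι →₀ ℕ) → (ι →₀ ℕ) → R)
    (h0 : ∀ β, Γ β 0 ≠ 0 → β = 0)
    (hmul : ∀ γ₁ γ₂ β,
      Γ β (γ₁ + γ₂) = ∑ p ∈ Finset.HasAntidiagonal.antidiagonal β, Γ p.1 γ₁ * Γ p.2 γ₂)
    (hgen : ∀ j β, Γ β (Finsupp.single j 1) ≠ 0 →
      β = Finsupp.single j 1 ∨ w (Finsupp.single j 1) < w β)
    (γ β : ι →₀ ℕ) (h : Γ β γ ≠ 0) : β = γ ∨ w γ < w β := by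
  induction γ using Finsupp.induction_single_one generalizing β with
  | zero => exact .inl (h0 β h)
  | single_one_add j γ ih =>
    rw [hmul] at h
    obtain ⟨⟨β₁, β₂⟩, hβ, hne⟩ := Finset.exists_ne_zero_of_sum_ne_zero h
    rw [Finset.HasAntidiagonal.mem_antidiagonal] at hβ
    subst hβ
    rw [map_add, map_add]
    rcases hgen j β₁ (left_ne_zero_of_mul hne) with h₁ | h₁ <;>
      rcases ih β₂ (right_ne_zero_of_mul hne) with h₂ | h₂
    · exact .inl (by rw [h₁, h₂])
    · exact .inr (h₁ ▸ add_lt_add_of_le_of_lt le_rfl h₂)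
    · exact .inr (h₂ ▸ add_lt_add_of_lt_of_le h₁ le_rfl)
    · exact .inr (add_lt_add h₁ h₂)

section Bracket

variable {d : ℕ}

theorem brk_add (a b : MIdx d) : brk (a + b) = brk a + brk b := by
  unfold brk
  apply Finsupp.sum_add_index' <;> intro j <;> cases j <;> intros <;> simp <;> ring

noncomputable def brkHom : MIdx d →+ ℤ := AddMonoidHom.mk' brk brk_add

@[simp]
theorem brkHom_apply (β : MIdx d) : brkHom β = brk β := rfl

@[simp]
theorem brk_single_inl (k : ℕ) : brk (Finsupp.single (Sum.inl k : ℕ ⊕ PIdx d) 1) = k - 1 := by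
  simp [brk, Finsupp.sum_single_index]

@[simp]
theorem brk_single_inr (n : PIdx d) : brk (Finsupp.single (Sum.inr n : ℕ ⊕ PIdx d) 1) = -1 := by
  simp [brk, Finsupp.sum_single_index]

theorem kSum_add (a b : MIdx d) : kSum (a + b) = kSum a + kSum b := by
  unfold kSum
  apply Finsupp.sum_add_index' <;> intro j <;> cases j <;> intros <;> simp

theorem nSum_add (a b : MIdx d) : nSum (a + b) = nSum a + nSum b := by
  unfold nSum
  apply Finsupp.sum_add_index' <;> intro j <;> cases j <;> intros <;> simp

@[simp]
theorem kSum_single_inl (k : ℕ) : kSum (Finsupp.single (Sum.inl k : ℕ ⊕ PIdx d) 1) = 1 := by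
  simp [kSum, Finsupp.sum_single_index]

@[simp]
theorem kSum_single_inr (n : PIdx d) : kSum (Finsupp.single (Sum.inr n : ℕ ⊕ PIdx d) 1) = 0 := by
  simp [kSum, Finsupp.sum_single_index]

@[simp]
theorem nSum_single_inl (k : ℕ) : nSum (Finsupp.single (Sum.inl k : ℕ ⊕ PIdx d) 1) = 0 := by
  simp [nSum, Finsupp.sum_single_index]

@[simp]
theorem nSum_single_inr (n : PIdx d) : nSum (Finsupp.single (Sum.inr n : ℕ ⊕ PIdx d) 1) = 1 := by
  simp [nSum, Finsupp.sum_single_index]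

theorem brk_eq_neg_nSum_of_kSum_eq_zero (β : MIdx d) (h : kSum β = 0) : brk β = -nSum β := by
  induction β using Finsupp.induction_single_one with
  | zero => simp [brk, nSum]
  | single_one_add j β ih =>
    rw [kSum_add] at h
    rcases j with k | n
    · simp at h
    · simp only [kSum_single_inr, zero_add] at h
      rw [brk_add, nSum_add, brk_single_inr, nSum_single_inr, ih h]
      push_cast
      ring

theorem neg_one_le_brk_of_populated {kb : ℕ} {β : MIdx d} (h : Populated kb β) : -1 ≤ brk β := by
  rcases h with ⟨n, rfl⟩ | ⟨hβkb, hk, hn⟩ | h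
  · simp
  · obtain ⟨β', rfl⟩ : ∃ β', β = Finsupp.single (Sum.inl kb) 1 + β' :=
      ⟨_, (add_tsub_cancel_of_le (Finsupp.single_le_iff.2 hβkb.ge)).symm⟩
    rw [kSum_add, kSum_single_inl] at hk
    rw [nSum_add, nSum_single_inl] at hn
    rw [brk_add, brk_single_inl, brk_eq_neg_nSum_of_kSum_eq_zero β' (by omega)]
    omega
  · omega

theorem brk_sub_single_inr {β : MIdx d} {n : PIdx d} (h : β (Sum.inr n) ≠ 0) :
    brk (β - Finsupp.single (Sum.inr n) 1) = brk β + 1 := by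
  conv_rhs => rw [← Finsupp.sub_add_single_one_cancel h]
  rw [brk_add, brk_single_inr]
  ring

end Bracket

theorem gamma_preserves_population_general {d : ℕ} (kb : ℕ)
    (π : PIdx d → MIdx d → ℝ)
    (hπpop' : ∀ (n : PIdx d) (β : MIdx d), π n β ≠ 0 →
      0 ≤ brk β ∨ β = Finsupp.single (Sum.inr n) 1)
    (Γ : MIdx d → MIdx d → ℝ)
    (hΓk : ∀ (k : ℕ) (β : MIdx d),
      Γ β (Finsupp.single (Sum.inl k) 1) =
        if β = Finsupp.single (Sum.inl k) 1 then 1 else 0)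
    (hΓn : ∀ (n : PIdx d) (β : MIdx d),
      Γ β (Finsupp.single (Sum.inr n) 1) =
        (if β = Finsupp.single (Sum.inr n) 1 then 1 else 0) + π n β)
    (hΓ1 : ∀ β : MIdx d, Γ β 0 = if β = 0 then 1 else 0)
    (hΓmul : ∀ γ₁ γ₂ β : MIdx d,
      Γ β (γ₁ + γ₂) = ∑ p ∈ Finset.HasAntidiagonal.antidiagonal β, Γ p.1 γ₁ * Γ p.2 γ₂)
    :
    (∀ β γ : MIdx d, Populated kb γ → Γ β γ ≠ 0 → Populated kb β) ∧
    (∀ β γ : MIdx d, 0 ≤ brk γ → Γ β γ ≠ 0 → 0 ≤ brk β) ∧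
    (∀ (n : PIdx d) (γ : MIdx d), Populated kb γ → 0 < γ (Sum.inr n) →
      0 ≤ brk (γ - Finsupp.single (Sum.inr n) 1)) := by
  have hgen : ∀ j β, Γ β (Finsupp.single j 1) ≠ 0 →
      β = Finsupp.single j 1 ∨ brkHom (Finsupp.single j 1) < brkHom β := by
    rintro (k | n) β h
    · rw [hΓk] at h
      exact .inl (by_contra fun hβ => h (if_neg hβ))
    · rw [hΓn] at h
      by_cases hβ : β = Finsupp.single (Sum.inr n) 1
      · exact .inl hβ
      rw [if_neg hβ, zero_add] at h
      refine (hπpop' n β h).elim (fun hβ' => .inr ?_) .inl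
      simp only [brkHom_apply, brk_single_inr]
      omega
  have htri : ∀ γ β : MIdx d, Γ β γ ≠ 0 → β = γ ∨ brk γ < brk β :=
    eq_or_weight_lt_of_apply_ne_zero brkHom Γ
      (fun β h => by_contra fun hβ => h (by rw [hΓ1, if_neg hβ])) hΓmul hgen
  refine ⟨fun β γ hγ h => ?_, fun β γ hγ h => ?_, fun n γ hγ hn => ?_⟩
  · rcases htri γ β h with rfl | hlt
    · exact hγ
    · exact .inr (.inr (by linarith [neg_one_le_brk_of_populated hγ]))
  · rcases htri γ β h with rfl | hlt
    · exact hγ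
    · exact hγ.trans hlt.le
  · rw [brk_sub_single_inr hn.ne']
    linarith [neg_one_le_brk_of_populated hγ]

/-- population is preserved by `Γ`: if `π^{(n)}_{β'} = 0` for all
non-populated `β'` and `π^{(n)}_β ≠ 0 ⟹ [β] ≥ 0 ∨ β = δ_n`, then `Γ` maps the
populated sector `T` into itself and the sector `T̃ = {π : π_β ≠ 0 ⟹ [β] ≥ 0}`
into itself; moreover `D^n T ⊆ T̃` for every `n`. -/
theorem gamma_preserves_population {d : ℕ} (α : ℝ) (kb : ℕ) (hkb : 3 ≤ kb)
    (hα : α < 0) (ha : 0 < 2 + ((kb : ℝ) - 1) * α)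
    (π : PIdx d → MIdx d → ℝ)
    (hπ : ∀ (n : PIdx d) (β : MIdx d), π n β ≠ 0 → (pDeg n : ℝ) < homog α kb β)
    (hπpop : ∀ (n : PIdx d) (β : MIdx d), ¬ Populated kb β → π n β = 0)
    (hπpop' : ∀ (n : PIdx d) (β : MIdx d), π n β ≠ 0 →
      0 ≤ brk β ∨ β = Finsupp.single (Sum.inr n) 1)
    (Γ : MIdx d → MIdx d → ℝ)
    (hΓk : ∀ (k : ℕ) (β : MIdx d),
      Γ β (Finsupp.single (Sum.inl k) 1) =
        if β = Finsupp.single (Sum.inl k) 1 then 1 else 0)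
    (hΓn : ∀ (n : PIdx d) (β : MIdx d),
      Γ β (Finsupp.single (Sum.inr n) 1) =
        (if β = Finsupp.single (Sum.inr n) 1 then 1 else 0) + π n β)
    (hΓ1 : ∀ β : MIdx d, Γ β 0 = if β = 0 then 1 else 0)
    (hΓmul : ∀ γ₁ γ₂ β : MIdx d,
      Γ β (γ₁ + γ₂) = ∑ p ∈ Finset.HasAntidiagonal.antidiagonal β, Γ p.1 γ₁ * Γ p.2 γ₂)
    :
    (∀ β γ : MIdx d, Populated kb γ → Γ β γ ≠ 0 → Populated kb β) ∧
    (∀ β γ : MIdx d, 0 ≤ brk γ → Γ β γ ≠ 0 → 0 ≤ brk β) ∧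
    (∀ (n : PIdx d) (γ : MIdx d), Populated kb γ → 0 < γ (Sum.inr n) →
      0 ≤ brk (γ - Finsupp.single (Sum.inr n) 1)) :=
  gamma_preserves_population_general kb π hπpop' Γ hΓk hΓn hΓ1 hΓmul
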